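/- Let f : X → Y be a perfect continuous surjection between Tychonoff topological spaces admitting an averaging operator with compact supports, and suppose Y is a k-space (compactly generated space). Let E be a complete Hausdorff locally convex real topological vector space. Then there exists a linear operator T : C(X,E) → C(Y,E) such that: (i) T(h)(y) belongs to the closed convex hull of h(f⁻¹(y)) for all y ∈ Y and h ∈ C(X,E); (ii) T(φ ∘ f) = φ for every φ ∈ C(Y,E); (iii) T is continuous when both C(X,E) and C(Y,E) carry the topology of uniform convergence, and also when both carry the topology of uniform convergence on compact sets. -/

import Mathlib

/-!
`T h y` is the barycentre of `h` with respect to the measure `g y`: the point `p` with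
`ℓ p = ∫ ℓ ∘ h d(g y)` for every continuous functional `ℓ`. It exists because the closed convex
hull of the compact set `h (f⁻¹ y)` is compact (`E` is complete), and for finitely many
functionals the vector of integrals is a Bochner integral in `ℝⁿ`, hence lies in the image of that
hull; it is unique because the dual of `E` separates points. Every `T h y` lies in the closed
convex hull of `h (f⁻¹ y)`, which gives (i), (ii), and, since closed convex neighbourhoods of `0`
form a basis, uniform continuity of `T` in both topologies. On a compact `C ⊆ Y` the map
`y ↦ ℓ (T h y)` is continuous by weak-* continuity of `g` (after truncating `ℓ ∘ h` outside the
compact `f⁻¹ C`), and on a compact set the weak topology is the original one, so `T h` is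
continuous on compacta, hence continuous because `Y` is a k-space.
-/

open MeasureTheory
open scoped UniformConvergence

/-- `s` is the support of the measure `μ`: the smallest closed set whose complement
has `μ`-measure zero. -/
def IsMeasSupport {X : Type*} [TopologicalSpace X] [MeasurableSpace X]
    (μ : Measure X) (s : Set X) : Prop :=
  IsClosed s ∧ μ sᶜ = 0 ∧ ∀ t : Set X, IsClosed t → μ tᶜ = 0 → s ⊆ t

/-- A space is a k-space (compactly generated) if a set is closed whenever its
intersection with every compact subspace is closed there. -/
def KSpace (X : Type*) [TopologicalSpace X] : Prop :=
  ∀ s : Set X, (∀ K : Set X, IsCompact K → IsClosed {x : K | (x : X) ∈ s}) → IsClosed s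

open Set Filter Topology
open scoped Uniformity

theorem IsMeasSupport.ae_mem {X : Type*} [TopologicalSpace X] [MeasurableSpace X]
    {μ : Measure X} {K : Set X} (hK : IsMeasSupport μ K) : ∀ᵐ x ∂μ, x ∈ K :=
  mem_ae_iff.mpr hK.2.1

theorem KSpace.continuous_of_continuousOn_isCompact {Y Z : Type*} [TopologicalSpace Y]
    [TopologicalSpace Z] (hY : KSpace Y) {p : Y → Z}
    (hp : ∀ C, IsCompact C → ContinuousOn p C) : Continuous p :=
  continuous_iff_isClosed.mpr fun _ hA => hY _ fun C hC =>
    hA.preimage (continuousOn_iff_continuous_domRestrict.mp (hp C hC))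

theorem IsCompact.closure_convexHull {E : Type*} [AddCommGroup E] [Module ℝ E] [UniformSpace E]
    [IsUniformAddGroup E] [ContinuousSMul ℝ E] [LocallyConvexSpace ℝ E] [CompleteSpace E]
    {K : Set E} (hK : IsCompact K) : IsCompact (closure (convexHull ℝ K)) :=
  (totallyBounded_convexHull.mpr hK.totallyBounded).closure.isCompact_of_isClosed isClosed_closure

theorem IsCompact.continuous_of_forall_dual_continuous {Z E : Type*} [TopologicalSpace Z]
    [AddCommGroup E] [Module ℝ E] [TopologicalSpace E] [SeparatingDual ℝ E] {Q : Set E}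
    (hQ : IsCompact Q) {φ : Z → E} (hφQ : ∀ z, φ z ∈ Q)
    (hφ : ∀ ℓ : StrongDual ℝ E, Continuous fun z => ℓ (φ z)) : Continuous φ := by
  have := isCompact_iff_compactSpace.mp hQ
  -- on a compact set the weak topology coincides with the original one
  have hj : IsClosedEmbedding fun (q : Q) (ℓ : StrongDual ℝ E) => ℓ q :=
    (continuous_pi fun ℓ => ℓ.continuous.comp continuous_subtype_val).isClosedEmbedding
      fun _ _ hab => Subtype.ext (SeparatingDual.eq_iff_forall_dual_eq.mpr (congrFun hab))
  exact continuous_subtype_val.comp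
    (hj.isInducing.continuous_iff.mpr (continuous_pi hφ) : Continuous fun z => (⟨φ z, hφQ z⟩ : Q))

theorem Continuous.integrable_of_ae_mem_isCompact {X F : Type*} [TopologicalSpace X]
    [MeasurableSpace X] [OpensMeasurableSpace X] [NormedAddCommGroup F] [SecondCountableTopology F]
    {μ : Measure X} [IsFiniteMeasure μ] {φ : X → F} (hφ : Continuous φ) {K : Set X}
    (hK : IsCompact K) (hμK : ∀ᵐ x ∂μ, x ∈ K) : Integrable φ μ := by
  obtain ⟨C, hC⟩ := hK.exists_bound_of_continuousOn hφ.continuousOn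
  exact Integrable.of_bound hφ.aestronglyMeasurable C (hμK.mono hC)

theorem ProbabilityMeasure.continuous_integral_of_ae_mem_isCompact {X Z : Type*}
    [TopologicalSpace X] [MeasurableSpace X] [OpensMeasurableSpace X] [TopologicalSpace Z]
    {μ : Z → ProbabilityMeasure X} (hμ : Continuous μ) {φ : X → ℝ} (hφ : Continuous φ)
    {K : Set X} (hK : IsCompact K) (hμK : ∀ z, ∀ᵐ x ∂(μ z : Measure X), x ∈ K) :
    Continuous fun z => ∫ x, φ x ∂(μ z : Measure X) := by
  obtain ⟨C, hC⟩ := hK.exists_bound_of_continuousOn hφ.continuousOn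
  have hCC : -|C| ≤ |C| := neg_le_self (abs_nonneg C)
  -- on `K`, `φ` agrees with its truncation to `[-|C|, |C|]`, a bounded continuous function
  let θ : BoundedContinuousFunction X ℝ :=
    (BoundedContinuousFunction.mkOfCompact ⟨((↑) : Icc (-|C|) |C| → ℝ), continuous_subtype_val⟩
      ).compContinuous ⟨fun x => projIcc _ _ hCC (φ x), continuous_projIcc.comp hφ⟩
  have hφθ : ∀ x ∈ K, φ x = θ x := fun x hx => by
    have hx' : |φ x| ≤ |C| := (Real.norm_eq_abs _ ▸ hC x hx).trans (le_abs_self C)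
    simp [θ, projIcc_of_mem hCC (abs_le.mp hx')]
  have : (fun z => ∫ x, φ x ∂(μ z : Measure X)) = fun z => ∫ x, θ x ∂(μ z : Measure X) :=
    funext fun z => integral_congr_ae ((hμK z).mono hφθ)
  rw [this]
  exact (ProbabilityMeasure.continuous_integral_boundedContinuousFunction θ).comp hμ

section Barycenter

variable {X E : Type*} [MeasurableSpace X] [AddCommGroup E] [Module ℝ E] [TopologicalSpace E]

def HasBarycenter (μ : Measure X) (φ : X → E) (p : E) : Prop :=
  ∀ ℓ : StrongDual ℝ E, ℓ p = ∫ x, ℓ (φ x) ∂μ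

open Classical in
/-- Junk value `0` when `φ` has no barycenter. -/
noncomputable def barycenter (μ : Measure X) (φ : X → E) : E :=
  if h : ∃ p, HasBarycenter μ φ p then h.choose else 0

variable {μ : Measure X} {φ ψ : X → E} {p q : E}

theorem HasBarycenter.barycenter_eq [SeparatingDual ℝ E] (h : HasBarycenter μ φ p) :
    barycenter μ φ = p := by
  have hex : ∃ p, HasBarycenter μ φ p := ⟨p, h⟩
  rw [barycenter, dif_pos hex]
  exact SeparatingDual.eq_iff_forall_dual_eq.mpr fun ℓ => (hex.choose_spec ℓ).trans (h ℓ).symm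

theorem HasBarycenter.add (hφ : HasBarycenter μ φ p) (hψ : HasBarycenter μ ψ q)
    (hφi : ∀ ℓ : StrongDual ℝ E, Integrable (fun x => ℓ (φ x)) μ)
    (hψi : ∀ ℓ : StrongDual ℝ E, Integrable (fun x => ℓ (ψ x)) μ) :
    HasBarycenter μ (φ + ψ) (p + q) := fun ℓ => by
  simp only [Pi.add_apply, map_add, hφ ℓ, hψ ℓ, integral_add (hφi ℓ) (hψi ℓ)]

theorem HasBarycenter.const_smul (h : HasBarycenter μ φ p) (c : ℝ) :
    HasBarycenter μ (c • φ) (c • p) := fun ℓ => by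
  simp only [Pi.smul_apply, map_smul, smul_eq_mul, h ℓ, integral_const_mul]

theorem hasBarycenter_const [IsProbabilityMeasure μ] (p : E) :
    HasBarycenter μ (fun _ => p) p := fun _ => by simp

theorem HasBarycenter.congr_ae (h : HasBarycenter μ φ p) (hφψ : φ =ᵐ[μ] ψ) :
    HasBarycenter μ ψ p := fun ℓ =>
  (h ℓ).trans (integral_congr_ae (hφψ.mono fun _ hx => congrArg ℓ hx))

/-- For finitely many functionals, bundled as `L : E → ℝᵗ`, the Bochner integral of `L ∘ φ` lies
in the compact convex set `L '' Q`; compactness of `Q` then handles all functionals at once. -/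
theorem IsCompact.exists_hasBarycenter_mem [IsProbabilityMeasure μ] {Q : Set E}
    (hQ : IsCompact Q) (hQc : Convex ℝ Q) (hφQ : ∀ᵐ x ∂μ, φ x ∈ Q)
    (hφ : ∀ ℓ : StrongDual ℝ E, Integrable (fun x => ℓ (φ x)) μ) :
    ∃ p ∈ Q, HasBarycenter μ φ p := by
  suffices ∀ t : Finset (StrongDual ℝ E),
      (Q ∩ ⋂ ℓ ∈ t, {p | ℓ p = ∫ x, ℓ (φ x) ∂μ}).Nonempty by
    obtain ⟨p, hpQ, hp⟩ :=
      hQ.inter_iInter_nonempty _ (fun ℓ => isClosed_eq ℓ.continuous continuous_const) this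
    exact ⟨p, hpQ, mem_iInter.mp hp⟩
  intro t
  let L : E →L[ℝ] (t → ℝ) := ContinuousLinearMap.pi fun ℓ => ℓ.1
  obtain ⟨p, hpQ, hp⟩ : ∫ x, L (φ x) ∂μ ∈ L '' Q :=
    (hQc.linear_image L.toLinearMap).integral_mem (hQ.image L.continuous).isClosed
      (hφQ.mono fun x hx => mem_image_of_mem L hx) (integrable_pi_iff.mpr fun ℓ => hφ ℓ)
  refine ⟨p, hpQ, mem_iInter₂.mpr fun ℓ hℓ => ?_⟩
  simpa [L, eval_integral fun ℓ : t => hφ ℓ] using congrFun hp ⟨ℓ, hℓ⟩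

end Barycenter

section CompactCarrier

variable {X E : Type*} [TopologicalSpace X] [MeasurableSpace X] [OpensMeasurableSpace X]
  [AddCommGroup E] [Module ℝ E] [UniformSpace E] [IsUniformAddGroup E] [ContinuousSMul ℝ E]
  [LocallyConvexSpace ℝ E] [T2Space E] [CompleteSpace E]
  {μ : Measure X} [IsProbabilityMeasure μ] {K : Set X}

theorem hasBarycenter_barycenter_of_ae_mem (hK : IsCompact K) (hμK : ∀ᵐ x ∂μ, x ∈ K)
    (h : C(X, E)) :
    HasBarycenter μ h (barycenter μ h) ∧ barycenter μ h ∈ closure (convexHull ℝ (h '' K)) := by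
  obtain ⟨p, hpQ, hp⟩ := (hK.image h.continuous).closure_convexHull.exists_hasBarycenter_mem
    (convex_convexHull ℝ _).closure
    (hμK.mono fun x hx => subset_closure (subset_convexHull ℝ _ (mem_image_of_mem h hx)))
    (fun ℓ => (ℓ.continuous.comp h.continuous).integrable_of_ae_mem_isCompact hK hμK)
  rw [hp.barycenter_eq]
  exact ⟨hp, hpQ⟩

theorem barycenter_add (hK : IsCompact K) (hμK : ∀ᵐ x ∂μ, x ∈ K) (h₁ h₂ : C(X, E)) :
    barycenter μ ⇑(h₁ + h₂) = barycenter μ h₁ + barycenter μ h₂ :=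
  ((hasBarycenter_barycenter_of_ae_mem hK hμK h₁).1.add
    (hasBarycenter_barycenter_of_ae_mem hK hμK h₂).1
    (fun ℓ => (ℓ.continuous.comp h₁.continuous).integrable_of_ae_mem_isCompact hK hμK)
    (fun ℓ => (ℓ.continuous.comp h₂.continuous).integrable_of_ae_mem_isCompact hK hμK)
    ).barycenter_eq

theorem barycenter_smul (hK : IsCompact K) (hμK : ∀ᵐ x ∂μ, x ∈ K) (c : ℝ) (h : C(X, E)) :
    barycenter μ ⇑(c • h) = c • barycenter μ h :=
  ((hasBarycenter_barycenter_of_ae_mem hK hμK h).1.const_smul c).barycenter_eq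

end CompactCarrier

theorem UniformFun.hasBasis_uniformity_subtype_of_basis {α β : Type*} [UniformSpace β]
    {P : (α →ᵤ β) → Prop} {ι : Sort*} {p : ι → Prop} {s : ι → Set (β × β)}
    (h : (𝓤 β).HasBasis p s) :
    (𝓤 (Subtype P)).HasBasis p fun i =>
      {uv | ∀ x, (UniformFun.toFun uv.1.1 x, UniformFun.toFun uv.2.1 x) ∈ s i} :=
  (UniformFun.hasBasis_uniformity_of_basis α β h).comap _

theorem ae_mem_preimage_of_ae_eq {X Y : Type*} [MeasurableSpace X] {ν : Measure X} {f : X → Y}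
    {y : Y} (hfy : ∀ᵐ x ∂ν, f x = y) {S : Set Y} (hy : y ∈ S) : ∀ᵐ x ∂ν, x ∈ f ⁻¹' S :=
  hfy.mono fun x hx => by rwa [mem_preimage, hx]

section FiberAverage

variable {X Y E : Type*} [TopologicalSpace X] [MeasurableSpace X] [OpensMeasurableSpace X]
  [TopologicalSpace Y]
  [AddCommGroup E] [Module ℝ E] [UniformSpace E] [IsUniformAddGroup E] [ContinuousSMul ℝ E]
  [LocallyConvexSpace ℝ E] [T2Space E] [CompleteSpace E]
  {f : X → Y} {μ : Y → ProbabilityMeasure X}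

theorem continuous_barycenter (hY : KSpace Y) (hf : IsProperMap f) (hμ : Continuous μ)
    (hμf : ∀ y, ∀ᵐ x ∂(μ y : Measure X), f x = y) (h : C(X, E)) :
    Continuous fun y => barycenter (μ y : Measure X) h := by
  refine hY.continuous_of_continuousOn_isCompact fun C hC => ?_
  have hK := hf.isCompact_preimage hC
  have hbar (y : C) :=
    hasBarycenter_barycenter_of_ae_mem hK (ae_mem_preimage_of_ae_eq (hμf _) y.2) h
  refine continuousOn_iff_continuous_domRestrict.mpr <|
    (hK.image h.continuous).closure_convexHull.continuous_of_forall_dual_continuous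
      (fun y => (hbar y).2) fun ℓ => ?_
  simp only [domRestrict_apply, fun y => (hbar y).1 ℓ]
  exact ProbabilityMeasure.continuous_integral_of_ae_mem_isCompact
    (hμ.comp continuous_subtype_val) (ℓ.continuous.comp h.continuous) hK
    fun y => ae_mem_preimage_of_ae_eq (hμf _) y.2

noncomputable def fiberAverage (hY : KSpace Y) (hf : IsProperMap f) (hμ : Continuous μ)
    (hμf : ∀ y, ∀ᵐ x ∂(μ y : Measure X), f x = y) : C(X, E) →ₗ[ℝ] C(Y, E) where
  toFun h := ⟨fun y => barycenter (μ y : Measure X) h, continuous_barycenter hY hf hμ hμf h⟩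
  map_add' h₁ h₂ := ContinuousMap.ext fun y =>
    barycenter_add (hf.isCompact_preimage isCompact_singleton)
      (ae_mem_preimage_of_ae_eq (hμf _) (mem_singleton y)) h₁ h₂
  map_smul' c h := ContinuousMap.ext fun y =>
    barycenter_smul (hf.isCompact_preimage isCompact_singleton)
      (ae_mem_preimage_of_ae_eq (hμf _) (mem_singleton y)) c h

variable (hY : KSpace Y) (hf : IsProperMap f) (hμ : Continuous μ)
  (hμf : ∀ y, ∀ᵐ x ∂(μ y : Measure X), f x = y)

theorem fiberAverage_apply_mem_closure_convexHull (h : C(X, E)) (y : Y) :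
    fiberAverage hY hf hμ hμf h y ∈ closure (convexHull ℝ (h '' (f ⁻¹' {y}))) :=
  (hasBarycenter_barycenter_of_ae_mem (hf.isCompact_preimage isCompact_singleton)
    (ae_mem_preimage_of_ae_eq (hμf _) (mem_singleton y)) h).2

theorem fiberAverage_comp (φ : C(Y, E)) :
    fiberAverage hY hf hμ hμf (φ.comp ⟨f, hf.continuous⟩) = φ :=
  ContinuousMap.ext fun y => ((hasBarycenter_const (φ y)).congr_ae
    ((hμf y).mono fun _ hx => congrArg φ hx.symm)).barycenter_eq

theorem fiberAverage_sub_mem {D : Set E} (hDc : IsClosed D) (hDcvx : Convex ℝ D) {S : Set Y}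
    {h h₀ : C(X, E)} (hhD : ∀ x ∈ f ⁻¹' S, h x - h₀ x ∈ D) {y : Y} (hy : y ∈ S) :
    fiberAverage hY hf hμ hμf h y - fiberAverage hY hf hμ hμf h₀ y ∈ D := by
  rw [← ContinuousMap.sub_apply, ← map_sub]
  refine closure_minimal (convexHull_min ?_ hDcvx) hDc
    (fiberAverage_apply_mem_closure_convexHull hY hf hμ hμf (h - h₀) y)
  rintro _ ⟨x, hx, rfl⟩
  exact hhD x (by rwa [mem_preimage, mem_singleton_iff.mp hx])

theorem uniformContinuous_fiberAverage :
    UniformContinuous (fiberAverage hY hf hμ hμf : C(X, E) → C(Y, E)) := by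
  have hE := (nhds_hasBasis_absConvex_closed ℝ E).uniformity_of_nhds_zero
  refine (hE.compactConvergenceUniformity.uniformContinuous_iff
    hE.compactConvergenceUniformity).mpr ?_
  rintro ⟨C, D⟩ ⟨hC, hD⟩
  exact ⟨(f ⁻¹' C, D), ⟨hf.isCompact_preimage hC, hD⟩, fun h₀ h hh y hy =>
    fiberAverage_sub_mem hY hf hμ hμf hD.2.1 hD.2.2.2 hh hy⟩

theorem uniformContinuous_fiberAverage_uniformFun :
    UniformContinuous fun h : {u : X →ᵤ E // Continuous (UniformFun.toFun u)} =>
      (⟨UniformFun.ofFun ⇑(fiberAverage hY hf hμ hμf ⟨UniformFun.toFun h.1, h.2⟩),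
        (fiberAverage hY hf hμ hμf ⟨UniformFun.toFun h.1, h.2⟩).continuous⟩ :
        {u : Y →ᵤ E // Continuous (UniformFun.toFun u)}) := by
  have hE := (nhds_hasBasis_absConvex_closed ℝ E).uniformity_of_nhds_zero
  refine ((UniformFun.hasBasis_uniformity_subtype_of_basis hE).uniformContinuous_iff
    (UniformFun.hasBasis_uniformity_subtype_of_basis hE)).mpr fun D hD =>
    ⟨D, hD, fun h₀ h hh y => ?_⟩
  exact fiberAverage_sub_mem hY hf hμ hμf hD.2.1 hD.2.2.2 (S := univ) (fun x _ => hh x) trivial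

end FiberAverage

theorem averaging_operator_kspace_general
    {X Y E : Type*} [TopologicalSpace X] [TopologicalSpace Y]
    [MeasurableSpace X] [BorelSpace X] (hY : KSpace Y)
    (f : X → Y) (hf : Continuous f)
    (hfclosed : IsClosedMap f) (hffib : ∀ y, IsCompact (f ⁻¹' {y}))
    (g : Y → {μ : ProbabilityMeasure X //
        μ.toMeasure.InnerRegular ∧ ∃ K : Set X, IsCompact K ∧ IsMeasSupport μ.toMeasure K})
    (hg : Topology.IsEmbedding g)
    (hgsupp : ∀ (y : Y) (K : Set X), IsMeasSupport (g y).1.toMeasure K → K ⊆ f ⁻¹' {y})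
    [AddCommGroup E] [Module ℝ E] [UniformSpace E] [IsUniformAddGroup E]
    [ContinuousSMul ℝ E] [LocallyConvexSpace ℝ E] [T2Space E] [CompleteSpace E] :
    ∃ T : C(X, E) → C(Y, E),
      (∀ h₁ h₂, T (h₁ + h₂) = T h₁ + T h₂) ∧
      (∀ (c : ℝ) h, T (c • h) = c • T h) ∧
      -- (i) values in closed convex hulls of fiber images
      (∀ (h : C(X, E)) (y : Y), T h y ∈ closure (convexHull ℝ (⇑h '' (f ⁻¹' {y})))) ∧
      -- (ii) averaging property
      (∀ φ : C(Y, E), T (φ.comp ⟨f, hf⟩) = φ) ∧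
      -- (iii) continuity for the topology of uniform convergence on compact sets
      Continuous T ∧
      -- (iii) continuity for the topology of uniform convergence
      Continuous (fun h : {u : X →ᵤ E // Continuous (UniformFun.toFun u)} =>
        (⟨UniformFun.ofFun ⇑(T ⟨UniformFun.toFun h.1, h.2⟩),
          (T ⟨UniformFun.toFun h.1, h.2⟩).continuous⟩ :
          {u : Y →ᵤ E // Continuous (UniformFun.toFun u)})) := by
  have hproper : IsProperMap f :=
    isProperMap_iff_isClosedMap_and_compact_fibers.mpr ⟨hf, hfclosed, hffib⟩
  have hμ : Continuous fun y => (g y).1 := continuous_subtype_val.comp hg.continuous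
  have hμf (y : Y) : ∀ᵐ x ∂((g y).1 : Measure X), f x = y := by
    obtain ⟨K, -, hK⟩ := (g y).2.2
    exact hK.ae_mem.mono fun x hx => hgsupp y K hK hx
  let T : C(X, E) →ₗ[ℝ] C(Y, E) := fiberAverage hY hproper hμ hμf
  exact ⟨T, T.map_add, T.map_smul, fiberAverage_apply_mem_closure_convexHull hY hproper hμ hμf,
    fiberAverage_comp hY hproper hμ hμf,
    (uniformContinuous_fiberAverage hY hproper hμ hμf).continuous,
    (uniformContinuous_fiberAverage_uniformFun hY hproper hμ hμf).continuous⟩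

/-- Let `f : X → Y` be a perfect continuous surjection of Tychonoff spaces
admitting an averaging operator with compact supports, with `Y` a k-space, and let `E`
be a complete Hausdorff locally convex real TVS. Then there is a linear operator
`T : C(X,E) → C(Y,E)` with values in the closed convex hulls of the fiber images, which
is a right inverse to composition with `f`, and is continuous for the uniform topology
and for the topology of uniform convergence on compact sets. -/
theorem averaging_operator_kspace
    {X Y E : Type*} [TopologicalSpace X] [T35Space X] [TopologicalSpace Y] [T35Space Y]
    [MeasurableSpace X] [BorelSpace X] (hY : KSpace Y)
    (f : X → Y) (hf : Continuous f) (hfsurj : Function.Surjective f)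
    (hfclosed : IsClosedMap f) (hffib : ∀ y, IsCompact (f ⁻¹' {y}))
    (g : Y → {μ : ProbabilityMeasure X //
        μ.toMeasure.InnerRegular ∧ ∃ K : Set X, IsCompact K ∧ IsMeasSupport μ.toMeasure K})
    (hg : Topology.IsEmbedding g)
    (hgsupp : ∀ (y : Y) (K : Set X), IsMeasSupport (g y).1.toMeasure K → K ⊆ f ⁻¹' {y})
    [AddCommGroup E] [Module ℝ E] [UniformSpace E] [IsUniformAddGroup E]
    [ContinuousSMul ℝ E] [LocallyConvexSpace ℝ E] [T2Space E] [CompleteSpace E] :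
    ∃ T : C(X, E) → C(Y, E),
      (∀ h₁ h₂, T (h₁ + h₂) = T h₁ + T h₂) ∧
      (∀ (c : ℝ) h, T (c • h) = c • T h) ∧
      -- (i) values in closed convex hulls of fiber images
      (∀ (h : C(X, E)) (y : Y), T h y ∈ closure (convexHull ℝ (⇑h '' (f ⁻¹' {y})))) ∧
      -- (ii) averaging property
      (∀ φ : C(Y, E), T (φ.comp ⟨f, hf⟩) = φ) ∧
      -- (iii) continuity for the topology of uniform convergence on compact sets
      Continuous T ∧
      -- (iii) continuity for the topology of uniform convergence
      Continuous (fun h : {u : X →ᵤ E // Continuous (UniformFun.toFun u)} =>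
        (⟨UniformFun.ofFun ⇑(T ⟨UniformFun.toFun h.1, h.2⟩),
          (T ⟨UniformFun.toFun h.1, h.2⟩).continuous⟩ :
          {u : Y →ᵤ E // Continuous (UniformFun.toFun u)})) :=
  averaging_operator_kspace_general hY f hf hfclosed hffib g hg hgsupp
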